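/- arXiv:2001.11758 — 6 statements merged into one kernel-verified Lean document; each statement's English description precedes it below -/
import Mathlib

section
/- Suppose not all nonflexible loads are zero or L_e > 0; let t̄ ∈ {1,…,T} be such that L_e^{(t̄−1)} < L_e ≤ L_e^{(t̄)}. Then the optimal charging cost equals V(L_e) = (∑_{s=1}^{t̄} η_s^{−1/(n−1)})^{−(n−1)} · (L_e + α_{t̄})^n + β_{t̄}, and the minimum defining V(L_e) is attained by some feasible charging profile. -/
open Finset

/-- Total electricity cost of a charging profile `ℓe` over time slots `1,…,T`,
with cost functions `f_t(ℓ) = η_t ℓ^n`. -/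
noncomputable def chargCost (T : ℕ) (n : ℝ) (η ℓ0 ℓe : ℕ → ℝ) : ℝ :=
  ∑ t ∈ Finset.Icc 1 T, η t * (ℓ0 t + ℓe t) ^ n

/-- Feasibility of a charging profile: nonnegative, and summing to the charging need `Le`. -/
def ChargFeasible (T : ℕ) (Le : ℝ) (ℓe : ℕ → ℝ) : Prop :=
  (∀ t ∈ Finset.Icc 1 T, 0 ≤ ℓe t) ∧ ∑ t ∈ Finset.Icc 1 T, ℓe t = Le

/-- Optimal charging cost `V(L_e)`. -/
noncomputable def Vopt (T : ℕ) (n : ℝ) (η ℓ0 : ℕ → ℝ) (Le : ℝ) : ℝ :=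
  sInf {c | ∃ ℓe, ChargFeasible T Le ℓe ∧ chargCost T n η ℓ0 ℓe = c}

/-- Cumulative nonflexible load `α_t = ∑_{s=1}^t ℓ_{0,s}`. -/
noncomputable def alphaC (ℓ0 : ℕ → ℝ) (t : ℕ) : ℝ := ∑ s ∈ Finset.Icc 1 t, ℓ0 s

/-- Cost of the nonflexible load after time `t`: `β_t = ∑_{s=t+1}^T f_s(ℓ_{0,s})`. -/
noncomputable def betaC (T : ℕ) (n : ℝ) (η ℓ0 : ℕ → ℝ) (t : ℕ) : ℝ :=
  ∑ s ∈ Finset.Icc (t + 1) T, η s * ℓ0 s ^ n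

/-- Energy thresholds `L_e^{(t)}` (for `0 ≤ t ≤ T-1`, with `L_e^{(0)} = 0`). -/
noncomputable def Lth (n : ℝ) (η ℓ0 : ℕ → ℝ) (t : ℕ) : ℝ :=
  if t = 0 then 0
  else (∑ s ∈ Finset.Icc 1 t, (η (t + 1) / η s) ^ (1 / (n - 1))) * ℓ0 (t + 1) - alphaC ℓ0 t

/-- Charging unit price `λ_e(L_e) = V(L_e) / (L_e + α_T)`. -/
noncomputable def lamE (T : ℕ) (n : ℝ) (η ℓ0 : ℕ → ℝ) (Le : ℝ) : ℝ :=
  Vopt T n η ℓ0 Le / (Le + alphaC ℓ0 T)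

/-! With `q = 1 / (n - 1)`, putting the load `η t ^ (-q) * c` on slot `t` makes its marginal cost
`n * c ^ (n - 1)`, whatever `t` is. The threshold conditions say precisely that the level
`c = (L_e + α_t̄) / ∑_{s ≤ t̄} η_s ^ (-q)` lies above the rescaled nonflexible load
`η t ^ q * ℓ_{0,t}` of every slot `t ≤ t̄` and below that of every slot `t > t̄` (these rescaled
loads increase with `t`). So filling slots `1, …, t̄` up to level `c` is feasible and equalises
the marginal costs of the charged slots, which by the tangent line inequality for `x ↦ x ^ n`
makes it optimal; its cost is `c ^ n * ∑_{s ≤ t̄} η_s ^ (-q) + β_t̄`. -/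

lemma rpow_add_mul_rpow_sub_one_mul_sub_le {p a x : ℝ} (hp : 1 ≤ p) (ha : 0 ≤ a) (hx : 0 ≤ x) :
    a ^ p + p * a ^ (p - 1) * (x - a) ≤ x ^ p := by
  rcases ha.eq_or_lt with rfl | ha
  · rcases hp.eq_or_lt with rfl | hp
    · simp
    · rw [Real.zero_rpow (by linarith), Real.zero_rpow (by linarith)]
      simpa using Real.rpow_nonneg hx p
  · have bernoulli := one_add_mul_self_le_rpow_one_add
      (s := x / a - 1) (by linarith [div_nonneg hx ha.le]) hp
    rw [add_sub_cancel, Real.div_rpow hx ha.le, le_div_iff₀ (by positivity)] at bernoulli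
    calc a ^ p + p * a ^ (p - 1) * (x - a)
        = (1 + p * (x / a - 1)) * a ^ p := by
          rw [Real.rpow_sub_one ha.ne']; field_simp
      _ ≤ x ^ p := bernoulli

/-- `μ` is a common marginal cost of `x`, exceeded only where `y` is larger than `x`. -/
theorem sum_mul_rpow_le_of_marginal {ι : Type*} (s : Finset ι) {p μ : ℝ} (hp : 1 ≤ p)
    {w x y : ι → ℝ} (hw : ∀ i ∈ s, 0 ≤ w i) (hx : ∀ i ∈ s, 0 ≤ x i) (hy : ∀ i ∈ s, 0 ≤ y i)
    (hsum : ∑ i ∈ s, x i = ∑ i ∈ s, y i)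
    (hμ : ∀ i ∈ s, μ * (y i - x i) ≤ w i * x i ^ (p - 1) * (y i - x i)) :
    ∑ i ∈ s, w i * x i ^ p ≤ ∑ i ∈ s, w i * y i ^ p := by
  have htangent : ∀ i ∈ s, w i * x i ^ p + p * (μ * (y i - x i)) ≤ w i * y i ^ p := by
    intro i hi
    calc w i * x i ^ p + p * (μ * (y i - x i))
        ≤ w i * x i ^ p + p * (w i * x i ^ (p - 1) * (y i - x i)) := by
          have := mul_le_mul_of_nonneg_left (hμ i hi) (by linarith : (0 : ℝ) ≤ p)
          linarith
      _ = w i * (x i ^ p + p * x i ^ (p - 1) * (y i - x i)) := by ring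
      _ ≤ w i * y i ^ p := by
          gcongr; exacts [hw i hi, rpow_add_mul_rpow_sub_one_mul_sub_le hp (hx i hi) (hy i hi)]
  have hzero : ∑ i ∈ s, p * (μ * (y i - x i)) = 0 := by
    rw [← mul_sum, ← mul_sum, sum_sub_distrib, hsum, sub_self, mul_zero, mul_zero]
  calc ∑ i ∈ s, w i * x i ^ p
      = ∑ i ∈ s, (w i * x i ^ p + p * (μ * (y i - x i))) := by rw [sum_add_distrib, hzero, add_zero]
    _ ≤ ∑ i ∈ s, w i * y i ^ p := sum_le_sum htangent

lemma mul_rpow_neg_mul_rpow {x : ℝ} (hx : 0 < x) {c : ℝ} (hc : 0 ≤ c) (q r : ℝ) :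
    x * (x ^ (-q) * c) ^ r = x ^ (1 - q * r) * c ^ r := by
  rw [Real.mul_rpow (by positivity) hc, ← Real.rpow_mul hx.le, ← mul_assoc,
    sub_eq_add_neg, Real.rpow_add hx, Real.rpow_one, neg_mul]

section WaterFilling

variable {n : ℝ} {η ℓ0 : ℕ → ℝ}

/-- The `(n-1)`-th power of `level n η ℓ0 t` is the marginal cost `η t * ℓ0 t ^ (n-1)` of slot `t`
(up to the factor `n`); water-filling raises the charged slots to a common level. -/
noncomputable def level (n : ℝ) (η ℓ0 : ℕ → ℝ) (t : ℕ) : ℝ := η t ^ (1 / (n - 1)) * ℓ0 t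

noncomputable def weightSum (n : ℝ) (η : ℕ → ℝ) (t : ℕ) : ℝ :=
  ∑ s ∈ Icc 1 t, η s ^ (-(1 / (n - 1)))

noncomputable def waterFill (n : ℝ) (η ℓ0 : ℕ → ℝ) (tb : ℕ) (c : ℝ) (t : ℕ) : ℝ :=
  if t ∈ Icc 1 tb then η t ^ (-(1 / (n - 1))) * c - ℓ0 t else 0

lemma level_rpow {t : ℕ} (hn : n ≠ 1) (hη : 0 ≤ η t) (hℓ0 : 0 ≤ ℓ0 t) :
    level n η ℓ0 t ^ (n - 1) = η t * ℓ0 t ^ (n - 1) := by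
  rw [level, Real.mul_rpow (by positivity) hℓ0, ← Real.rpow_mul hη,
    one_div_mul_cancel (sub_ne_zero.mpr hn), Real.rpow_one]

lemma rpow_neg_mul_level {t : ℕ} (hη : 0 < η t) :
    η t ^ (-(1 / (n - 1))) * level n η ℓ0 t = ℓ0 t := by
  rw [level, ← mul_assoc, ← Real.rpow_add hη, neg_add_cancel, Real.rpow_zero, one_mul]

lemma monotoneOn_level {T : ℕ} (hn : 1 < n) (hη : ∀ t ∈ Icc 1 T, 0 < η t)
    (hℓ0 : ∀ t ∈ Icc 1 T, 0 ≤ ℓ0 t)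
    (hord : ∀ s t : ℕ, 1 ≤ s → s ≤ t → t ≤ T → η s * ℓ0 s ^ (n - 1) ≤ η t * ℓ0 t ^ (n - 1)) :
    MonotoneOn (level n η ℓ0) (Icc 1 T) := by
  intro s hs t ht hst
  have hnonneg : ∀ r ∈ Icc 1 T, 0 ≤ level n η ℓ0 r := fun r hr =>
    mul_nonneg (Real.rpow_nonneg (hη r hr).le _) (hℓ0 r hr)
  rw [← Real.rpow_le_rpow_iff (hnonneg s hs) (hnonneg t ht) (sub_pos.mpr hn),
    level_rpow hn.ne' (hη s hs).le (hℓ0 s hs), level_rpow hn.ne' (hη t ht).le (hℓ0 t ht)]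
  exact hord s t (mem_Icc.mp hs).1 hst (mem_Icc.mp ht).2

lemma weightSum_pos {tb : ℕ} (htb : 1 ≤ tb) (hη : ∀ t ∈ Icc 1 tb, 0 < η t) :
    0 < weightSum n η tb :=
  sum_pos (fun t ht => Real.rpow_pos_of_pos (hη t ht) _) ⟨1, mem_Icc.mpr ⟨le_rfl, htb⟩⟩

lemma Lth_eq {k : ℕ} (hη : ∀ t ∈ Icc 1 (k + 1), 0 < η t) :
    Lth n η ℓ0 k = weightSum n η k * level n η ℓ0 (k + 1) - alphaC ℓ0 k := by
  rcases Nat.eq_zero_or_pos k with rfl | hk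
  · simp [Lth, weightSum, alphaC]
  have hηk := hη (k + 1) (mem_Icc.mpr ⟨by omega, le_rfl⟩)
  rw [Lth, if_neg hk.ne', weightSum, level, sum_mul, sum_mul]
  congr 1
  refine sum_congr rfl fun s hs => ?_
  have hηs := hη s (Icc_subset_Icc_right (Nat.le_succ k) hs)
  rw [Real.div_rpow hηk.le hηs.le, Real.rpow_neg hηs.le, div_eq_mul_inv]
  ring

lemma Lth_eq_succ {k : ℕ} (hη : ∀ t ∈ Icc 1 (k + 1), 0 < η t) :
    Lth n η ℓ0 k = weightSum n η (k + 1) * level n η ℓ0 (k + 1) - alphaC ℓ0 (k + 1) := by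
  rw [Lth_eq hη, weightSum, weightSum, alphaC, alphaC, sum_Icc_succ_top (by omega),
    sum_Icc_succ_top (by omega), add_mul,
    rpow_neg_mul_level (hη (k + 1) (mem_Icc.mpr ⟨by omega, le_rfl⟩))]
  ring

lemma add_waterFill_of_mem {tb t : ℕ} {c : ℝ} (ht : t ∈ Icc 1 tb) :
    ℓ0 t + waterFill n η ℓ0 tb c t = η t ^ (-(1 / (n - 1))) * c := by
  rw [waterFill, if_pos ht, add_sub_cancel]

lemma waterFill_of_notMem {tb t : ℕ} {c : ℝ} (ht : t ∉ Icc 1 tb) : waterFill n η ℓ0 tb c t = 0 :=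
  if_neg ht

lemma sum_waterFill {T tb : ℕ} (htb : tb ≤ T) (c : ℝ) :
    ∑ t ∈ Icc 1 T, waterFill n η ℓ0 tb c t = weightSum n η tb * c - alphaC ℓ0 tb := by
  rw [← sum_filter_add_sum_filter_not (Icc 1 T) (· ∈ Icc 1 tb),
    sum_eq_zero fun t ht => waterFill_of_notMem (mem_filter.mp ht).2, add_zero,
    filter_mem_eq_inter, inter_eq_right.mpr (Icc_subset_Icc_right htb), weightSum, sum_mul, alphaC,
    ← sum_sub_distrib]
  exact sum_congr rfl fun t ht => if_pos ht

lemma chargCost_waterFill {T tb : ℕ} (hn : n ≠ 1) (htb : tb ≤ T)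
    (hη : ∀ t ∈ Icc 1 tb, 0 < η t) {c : ℝ} (hc : 0 ≤ c) :
    chargCost T n η ℓ0 (waterFill n η ℓ0 tb c) = weightSum n η tb * c ^ n + betaC T n η ℓ0 tb := by
  have hsplit : Icc 1 T = Icc 1 tb ∪ Icc (tb + 1) T := by
    ext t; simp only [mem_union, mem_Icc]; omega
  have hdisj : Disjoint (Icc 1 tb) (Icc (tb + 1) T) :=
    disjoint_left.mpr fun t h1 h2 => by simp only [mem_Icc] at h1 h2; omega
  rw [chargCost, hsplit, sum_union hdisj, weightSum, sum_mul, betaC]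
  congr 1
  · refine sum_congr rfl fun t ht => ?_
    -- `1 - q * n = -q` for `q = 1 / (n - 1)`
    rw [add_waterFill_of_mem ht, mul_rpow_neg_mul_rpow (hη t ht) hc]
    congr 2
    field_simp [sub_ne_zero.mpr hn]
    ring
  · refine sum_congr rfl fun t ht => ?_
    rw [waterFill_of_notMem fun h => by simp only [mem_Icc] at h ht; omega, add_zero]

theorem isLeast_chargCost_waterFill {T tb : ℕ} (hn : 1 < n) (htb : tb ≤ T)
    (hη : ∀ t ∈ Icc 1 T, 0 < η t) (hℓ0 : ∀ t ∈ Icc 1 T, 0 ≤ ℓ0 t) {Le c : ℝ} (hc : 0 ≤ c)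
    (hLe : weightSum n η tb * c = Le + alphaC ℓ0 tb)
    (hlow : ∀ t ∈ Icc 1 tb, level n η ℓ0 t ≤ c) (hhigh : ∀ t ∈ Icc (tb + 1) T, c ≤ level n η ℓ0 t) :
    IsLeast {v | ∃ ℓe, ChargFeasible T Le ℓe ∧ chargCost T n η ℓ0 ℓe = v}
      (weightSum n η tb * c ^ n + betaC T n η ℓ0 tb) := by
  have hηtb : ∀ t ∈ Icc 1 tb, 0 < η t := fun t ht => hη t (Icc_subset_Icc_right htb ht)
  have hsum : ∑ t ∈ Icc 1 T, waterFill n η ℓ0 tb c t = Le := by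
    rw [sum_waterFill htb, hLe, add_sub_cancel_right]
  have hnonneg : ∀ t ∈ Icc 1 T, 0 ≤ waterFill n η ℓ0 tb c t := by
    intro t ht
    by_cases hact : t ∈ Icc 1 tb
    · rw [waterFill, if_pos hact, sub_nonneg,
        ← rpow_neg_mul_level (n := n) (ℓ0 := ℓ0) (hηtb t hact)]
      exact mul_le_mul_of_nonneg_left (hlow t hact) (Real.rpow_nonneg (hηtb t hact).le _)
    · rw [waterFill_of_notMem hact]
  refine ⟨⟨_, ⟨hnonneg, hsum⟩, chargCost_waterFill hn.ne' htb hηtb hc⟩, ?_⟩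
  rintro _ ⟨ℓe, ⟨hℓe, hℓe_sum⟩, rfl⟩
  rw [← chargCost_waterFill hn.ne' htb hηtb hc]
  refine sum_mul_rpow_le_of_marginal _ (μ := c ^ (n - 1)) (by linarith)
    (fun t ht => (hη t ht).le) (fun t ht => add_nonneg (hℓ0 t ht) (hnonneg t ht))
    (fun t ht => add_nonneg (hℓ0 t ht) (hℓe t ht))
    (by rw [sum_add_distrib, sum_add_distrib, hsum, hℓe_sum]) fun t ht => ?_
  by_cases hact : t ∈ Icc 1 tb
  · rw [add_waterFill_of_mem hact, mul_rpow_neg_mul_rpow (hηtb t hact) hc,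
      one_div_mul_cancel (sub_ne_zero.mpr hn.ne'), sub_self, Real.rpow_zero, one_mul]
  · have hup : t ∈ Icc (tb + 1) T := by simp only [mem_Icc] at ht hact ⊢; omega
    rw [waterFill_of_notMem hact, add_zero, add_sub_cancel_left]
    refine mul_le_mul_of_nonneg_right ?_ (hℓe t ht)
    rw [← level_rpow hn.ne' (hη t ht).le (hℓ0 t ht)]
    exact Real.rpow_le_rpow hc (hhigh t hup) (sub_pos.mpr hn).le

end WaterFilling

lemma mul_div_rpow_eq_rpow_neg_mul {S A : ℝ} (hS : 0 < S) (hA : 0 ≤ A) (n : ℝ) :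
    S * (A / S) ^ n = S ^ (-(n - 1)) * A ^ n := by
  rw [Real.div_rpow hA hS.le, neg_sub, Real.rpow_sub hS, Real.rpow_one]
  ring

theorem optimal_charging_cost_formula_general
    (T : ℕ) (n : ℝ) (η ℓ0 : ℕ → ℝ)
    (hn : (2 : ℝ) ≤ n)
    (hη : ∀ t ∈ Finset.Icc 1 T, 0 < η t)
    (hℓ0 : ∀ t ∈ Finset.Icc 1 T, 0 ≤ ℓ0 t)
    (hord : ∀ s t : ℕ, 1 ≤ s → s ≤ t → t ≤ T →
      η s * ℓ0 s ^ (n - 1) ≤ η t * ℓ0 t ^ (n - 1))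
    (Le : ℝ)
    (tb : ℕ) (htb : tb ∈ Finset.Icc 1 T)
    (hlow : Lth n η ℓ0 (tb - 1) < Le)
    (hhigh : tb < T → Le ≤ Lth n η ℓ0 tb) :
    Vopt T n η ℓ0 Le =
      (∑ s ∈ Finset.Icc 1 tb, η s ^ (-(1 / (n - 1)))) ^ (-(n - 1))
        * (Le + alphaC ℓ0 tb) ^ n + betaC T n η ℓ0 tb ∧
    IsLeast {c | ∃ ℓe, ChargFeasible T Le ℓe ∧ chargCost T n η ℓ0 ℓe = c}
      ((∑ s ∈ Finset.Icc 1 tb, η s ^ (-(1 / (n - 1)))) ^ (-(n - 1))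
        * (Le + alphaC ℓ0 tb) ^ n + betaC T n η ℓ0 tb) := by
  obtain ⟨htb1, htbT⟩ := mem_Icc.mp htb
  have hn1 : 1 < n := by linarith
  have hS : 0 < weightSum n η tb :=
    weightSum_pos htb1 fun t ht => hη t (Icc_subset_Icc_right htbT ht)
  have hmono := monotoneOn_level hn1 hη hℓ0 hord
  set c := (Le + alphaC ℓ0 tb) / weightSum n η tb
  have hc_low : level n η ℓ0 tb < c := by
    obtain ⟨k, rfl⟩ : ∃ k, tb = k + 1 := ⟨tb - 1, by omega⟩
    rw [Nat.add_sub_cancel, Lth_eq_succ fun t ht => hη t (Icc_subset_Icc_right htbT ht)] at hlow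
    rw [lt_div_iff₀ hS]
    linarith
  have hc_high : ∀ t ∈ Icc (tb + 1) T, c ≤ level n η ℓ0 t := by
    intro t ht
    obtain ⟨ht1, htT⟩ := mem_Icc.mp ht
    have hLth := hhigh (by omega)
    rw [Lth_eq fun s hs => hη s (Icc_subset_Icc_right (by omega) hs)] at hLth
    calc c ≤ level n η ℓ0 (tb + 1) := by rw [div_le_iff₀ hS]; linarith
      _ ≤ level n η ℓ0 t :=
        hmono (mem_Icc.mpr ⟨by omega, by omega⟩) (mem_Icc.mpr ⟨by omega, htT⟩) ht1
  have hc : 0 ≤ c := (mul_nonneg (Real.rpow_nonneg (hη tb htb).le _) (hℓ0 tb htb)).trans hc_low.le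
  have hA : 0 ≤ Le + alphaC ℓ0 tb :=
    mul_div_cancel₀ (Le + alphaC ℓ0 tb) hS.ne' ▸ mul_nonneg hS.le hc
  have hleast := isLeast_chargCost_waterFill hn1 htbT hη hℓ0 hc (mul_div_cancel₀ _ hS.ne')
    (fun t ht => (hmono (Icc_subset_Icc_right htbT ht) htb (mem_Icc.mp ht).2).trans hc_low.le)
    hc_high
  rw [mul_div_rpow_eq_rpow_neg_mul hS hA n] at hleast
  exact ⟨hleast.csInf_eq, hleast⟩

/-- Prop. 1: if not all nonflexible loads are zero or `L_e > 0`, and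
`L_e^{(t̄-1)} < L_e ≤ L_e^{(t̄)}`, then the optimal charging cost is
`V(L_e) = (∑_{s=1}^{t̄} η_s^{-1/(n-1)})^{-(n-1)} (L_e + α_{t̄})^n + β_{t̄}`,
and the minimum defining `V(L_e)` is attained. -/
theorem optimal_charging_cost_formula
    (T : ℕ) (n : ℝ) (η ℓ0 : ℕ → ℝ)
    (hT : 2 ≤ T) (hn : (2 : ℝ) ≤ n)
    (hη : ∀ t ∈ Finset.Icc 1 T, 0 < η t)
    (hℓ0 : ∀ t ∈ Finset.Icc 1 T, 0 ≤ ℓ0 t)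
    (hord : ∀ s t : ℕ, 1 ≤ s → s ≤ t → t ≤ T →
      η s * ℓ0 s ^ (n - 1) ≤ η t * ℓ0 t ^ (n - 1))
    (Le : ℝ)
    (hpos : (¬ ∀ t ∈ Finset.Icc 1 T, ℓ0 t = 0) ∨ 0 < Le)
    (tb : ℕ) (htb : tb ∈ Finset.Icc 1 T)
    (hlow : Lth n η ℓ0 (tb - 1) < Le)
    (hhigh : tb < T → Le ≤ Lth n η ℓ0 tb) :
    Vopt T n η ℓ0 Le =
      (∑ s ∈ Finset.Icc 1 tb, η s ^ (-(1 / (n - 1)))) ^ (-(n - 1))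
        * (Le + alphaC ℓ0 tb) ^ n + betaC T n η ℓ0 tb ∧
    IsLeast {c | ∃ ℓe, ChargFeasible T Le ℓe ∧ chargCost T n η ℓ0 ℓe = c}
      ((∑ s ∈ Finset.Icc 1 tb, η s ^ (-(1 / (n - 1)))) ^ (-(n - 1))
        * (Le + alphaC ℓ0 tb) ^ n + betaC T n η ℓ0 tb) :=
  optimal_charging_cost_formula_general T n η ℓ0 hn hη hℓ0 hord Le tb htb hlow hhigh
end

section
/- Let t̄ ∈ {1,…,T} and L_e with L_e^{(t̄−1)} < L_e ≤ L_e^{(t̄)}. Define the profile ℓ_e by ℓ_{e,s} = η_s^{−1/(n−1)} · (L_e + α_{t̄}) / (∑_{u=1}^{t̄} η_u^{−1/(n−1)}) − ℓ_{0,s} for s ≤ t̄ and ℓ_{e,s} = 0 for s > t̄. Then ℓ_e is feasible for the charging scheduling problem (ℓ_{e,s} ≥ 0 for all s and ∑_s ℓ_{e,s} = L_e) and attains the minimum: ∑_{t=1}^T f_t(ℓ_{0,t} + ℓ_{e,t}) = V(L_e). -/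
open Finset

lemma wf_grad_ineq {n : ℝ} (hn : (2:ℝ) ≤ n) {a x : ℝ} (ha : 0 ≤ a) (hx : 0 ≤ x) :
    a ^ n + n * a ^ (n - 1) * (x - a) ≤ x ^ n := by
  have hn1 : (1:ℝ) ≤ n := by linarith
  rcases eq_or_lt_of_le ha with h0 | h0
  · rw [← h0, Real.zero_rpow (by positivity), Real.zero_rpow (by nlinarith : n - 1 ≠ 0)]
    simpa using Real.rpow_nonneg hx n
  · have hsge : -1 ≤ x / a - 1 := by
      have : 0 ≤ x / a := div_nonneg hx h0.le
      linarith
    have hb := one_add_mul_self_le_rpow_one_add hsge hn1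
    rw [show 1 + (x / a - 1) = x / a by ring] at hb
    have hapos : 0 < a ^ n := Real.rpow_pos_of_pos h0 n
    have h2 := mul_le_mul_of_nonneg_left hb hapos.le
    rw [Real.div_rpow hx h0.le, mul_div_cancel₀ _ (ne_of_gt hapos)] at h2
    have key : a ^ n = a ^ (n - 1) * a := by
      rw [← Real.rpow_add_one h0.ne' (n - 1), sub_add_cancel]
    have e1 : a ^ n + n * a ^ (n - 1) * (x - a) = a ^ n * (1 + n * (x / a - 1)) := by
      rw [key]; field_simp
    linarith

lemma wf_rpow_helper {e b q m : ℝ} (he : 0 < e) (hb : 0 ≤ b) (hqm : q * m = 1) :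
    (e ^ q * b) ^ m = e * b ^ m := by
  rw [Real.mul_rpow (Real.rpow_pos_of_pos he q).le hb, ← Real.rpow_mul he.le, hqm,
    Real.rpow_one]

lemma wf_rpow_helper2 {e b q m : ℝ} (he : 0 < e) (hb : 0 ≤ b) (hqm : m * q = 1) :
    (e * b ^ m) ^ q = e ^ q * b := by
  rw [Real.mul_rpow he.le (Real.rpow_nonneg hb m), ← Real.rpow_mul hb, hqm, Real.rpow_one]

/-- for `L_e^{(t̄-1)} < L_e ≤ L_e^{(t̄)}`, the explicit water-filling
profile (filling the first `t̄` slots up to a common marginal cost and leaving the other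
slots empty) is feasible and attains the optimal charging cost `V(L_e)`. -/
theorem water_filling_profile_is_optimal
    (T : ℕ) (n : ℝ) (η ℓ0 : ℕ → ℝ)
    (hT : 2 ≤ T) (hn : (2 : ℝ) ≤ n)
    (hη : ∀ t ∈ Finset.Icc 1 T, 0 < η t)
    (hℓ0 : ∀ t ∈ Finset.Icc 1 T, 0 ≤ ℓ0 t)
    (hord : ∀ s t : ℕ, 1 ≤ s → s ≤ t → t ≤ T →
      η s * ℓ0 s ^ (n - 1) ≤ η t * ℓ0 t ^ (n - 1))
    (Le : ℝ)
    (tb : ℕ) (htb : tb ∈ Finset.Icc 1 T)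
    (hlow : Lth n η ℓ0 (tb - 1) < Le)
    (hhigh : tb < T → Le ≤ Lth n η ℓ0 tb)
    (ℓe : ℕ → ℝ)
    (hℓe : ∀ s, ℓe s =
      if s ≤ tb then
        η s ^ (-(1 / (n - 1))) * (Le + alphaC ℓ0 tb)
          / (∑ u ∈ Finset.Icc 1 tb, η u ^ (-(1 / (n - 1)))) - ℓ0 s
      else 0) :
    ChargFeasible T Le ℓe ∧ chargCost T n η ℓ0 ℓe = Vopt T n η ℓ0 Le := by
  obtain ⟨htb1, htbT⟩ := Finset.mem_Icc.mp htb
  set p := 1 / (n - 1) with hp_def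
  have hn1 : (0:ℝ) < n - 1 := by linarith
  have hp : 0 < p := by positivity
  have hnp : (n - 1) * p = 1 := by rw [hp_def]; field_simp
  have hmemT : ∀ s : ℕ, 1 ≤ s → s ≤ tb → s ∈ Finset.Icc 1 T :=
    fun s h1 h2 => Finset.mem_Icc.mpr ⟨h1, le_trans h2 htbT⟩
  set S := ∑ u ∈ Finset.Icc 1 tb, η u ^ (-p) with hS_def
  have hSpos : 0 < S := by
    apply Finset.sum_pos
    · intro u hu
      obtain ⟨h1, h2⟩ := Finset.mem_Icc.mp hu
      exact Real.rpow_pos_of_pos (hη u (hmemT u h1 h2)) _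
    · exact ⟨tb, Finset.mem_Icc.mpr ⟨htb1, le_refl tb⟩⟩
  set c := (Le + alphaC ℓ0 tb) / S with hc_def
  have hcS : c * S = Le + alphaC ℓ0 tb := div_mul_cancel₀ _ hSpos.ne'
  -- ratio sum identity
  have hratio : ∀ e : ℝ, 0 < e →
      ∑ s ∈ Finset.Icc 1 tb, (e / η s) ^ p = e ^ p * S := by
    intro e he
    rw [hS_def, Finset.mul_sum]
    apply Finset.sum_congr rfl
    intro s hs
    obtain ⟨h1, h2⟩ := Finset.mem_Icc.mp hs
    have hηs := hη s (hmemT s h1 h2)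
    rw [Real.div_rpow he.le hηs.le, Real.rpow_neg hηs.le, div_eq_mul_inv]
  -- Lth formula at tb - 1
  have hηtb := hη tb htb
  have hℓ0tb := hℓ0 tb htb
  have hLth : Lth n η ℓ0 (tb - 1) = η tb ^ p * ℓ0 tb * S - alphaC ℓ0 tb := by
    rcases eq_or_lt_of_le htb1 with h1 | h1
    · have heq : tb = 1 := h1.symm
      have h0 : tb - 1 = 0 := by omega
      rw [h0, Lth, if_pos rfl, hS_def, heq]
      simp only [Finset.Icc_self, Finset.sum_singleton, alphaC]
      have h : η 1 ^ p * η 1 ^ (-p) = 1 := by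
        rw [← Real.rpow_add (heq ▸ hηtb), add_neg_cancel, Real.rpow_zero]
      linear_combination (-ℓ0 1 : ℝ) * h
    · have hne : tb - 1 ≠ 0 := by omega
      have htt : tb - 1 + 1 = tb := by omega
      rw [Lth, if_neg hne, htt, ← hp_def]
      have hsp := Finset.sum_Icc_succ_top (by omega : 1 ≤ tb - 1 + 1)
        (fun s => (η tb / η s) ^ p)
      rw [htt] at hsp
      have hap := Finset.sum_Icc_succ_top (by omega : 1 ≤ tb - 1 + 1) ℓ0
      rw [htt] at hap
      have hdiv : (η tb / η tb) ^ p = 1 := by rw [div_self hηtb.ne', Real.one_rpow]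
      have hr := hratio (η tb) hηtb
      have hsum' : ∑ s ∈ Finset.Icc 1 (tb - 1), (η tb / η s) ^ p = η tb ^ p * S - 1 := by
        rw [hsp, hdiv] at hr; linarith
      have halpha : alphaC ℓ0 tb = alphaC ℓ0 (tb - 1) + ℓ0 tb := hap
      rw [hsum', halpha]; ring
  have hkey : η tb ^ p * ℓ0 tb < c := by
    rw [hLth] at hlow
    have : η tb ^ p * ℓ0 tb * S < c * S := by rw [hcS]; linarith
    exact lt_of_mul_lt_mul_right this hSpos.le
  have hcpos : 0 < c := lt_of_le_of_lt (by positivity) hkey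
  -- ordering transported through rpow p
  have hords : ∀ s : ℕ, 1 ≤ s → s ≤ tb → η s ^ p * ℓ0 s ≤ η tb ^ p * ℓ0 tb := by
    intro s h1 h2
    have h := hord s tb h1 h2 htbT
    have hηs := hη s (hmemT s h1 h2)
    have hℓ0s := hℓ0 s (hmemT s h1 h2)
    have := Real.rpow_le_rpow (by positivity) h hp.le
    rwa [wf_rpow_helper2 hηs hℓ0s hnp, wf_rpow_helper2 hηtb hℓ0tb hnp] at this
  -- value of the profile on 1..tb
  have hval : ∀ s : ℕ, 1 ≤ s → s ≤ tb → ℓ0 s + ℓe s = η s ^ (-p) * c := by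
    intro s h1 h2
    rw [hℓe s, if_pos h2, hc_def, hp_def]
    ring
  -- nonnegativity
  have hnonneg : ∀ s ∈ Finset.Icc 1 T, 0 ≤ ℓe s := by
    intro s hs
    obtain ⟨h1, _⟩ := Finset.mem_Icc.mp hs
    by_cases h2 : s ≤ tb
    · have hv := hval s h1 h2
      have hηs := hη s (hmemT s h1 h2)
      have hinv : η s ^ (-p) * (η s ^ p * ℓ0 s) = ℓ0 s := by
        rw [← mul_assoc, ← Real.rpow_add hηs, neg_add_cancel, Real.rpow_zero, one_mul]
      have hlt : ℓ0 s ≤ η s ^ (-p) * c := by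
        calc ℓ0 s = η s ^ (-p) * (η s ^ p * ℓ0 s) := hinv.symm
          _ ≤ η s ^ (-p) * (η tb ^ p * ℓ0 tb) := by
              apply mul_le_mul_of_nonneg_left (hords s h1 h2)
                (Real.rpow_pos_of_pos hηs _).le
          _ ≤ η s ^ (-p) * c := by
              apply mul_le_mul_of_nonneg_left hkey.le (Real.rpow_pos_of_pos hηs _).le
      linarith [hv]
    · rw [hℓe s, if_neg h2]
  -- sum = Le
  have hIcc : ∀ m : ℕ, Finset.Icc 1 m = Finset.Ioc 0 m := by
    intro m; ext x; simp; omega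
  have hsplitT : ∀ f : ℕ → ℝ, ∑ t ∈ Finset.Icc 1 T, f t
      = ∑ t ∈ Finset.Icc 1 tb, f t + ∑ t ∈ Finset.Icc (tb + 1) T, f t := by
    intro f
    rw [hIcc T, hIcc tb, Finset.Icc_add_one_left_eq_Ioc]
    exact (Finset.sum_Ioc_consecutive f (Nat.zero_le tb) htbT).symm
  have hsum : ∑ t ∈ Finset.Icc 1 T, ℓe t = Le := by
    rw [hsplitT ℓe]
    have h2 : ∑ t ∈ Finset.Icc (tb + 1) T, ℓe t = 0 := by
      apply Finset.sum_eq_zero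
      intro t ht
      obtain ⟨ha, _⟩ := Finset.mem_Icc.mp ht
      rw [hℓe t, if_neg (by omega)]
    have h1 : ∑ t ∈ Finset.Icc 1 tb, ℓe t = c * S - alphaC ℓ0 tb := by
      have he : ∀ t ∈ Finset.Icc 1 tb, ℓe t = η t ^ (-p) * c - ℓ0 t := by
        intro t ht
        obtain ⟨ha, hb⟩ := Finset.mem_Icc.mp ht
        have := hval t ha hb; linarith
      rw [Finset.sum_congr rfl he, Finset.sum_sub_distrib, ← Finset.sum_mul]
      rw [hS_def, alphaC, mul_comm]
    rw [h1, h2, hcS]; ring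
  refine ⟨⟨hnonneg, hsum⟩, ?_⟩
  -- cost of the profile
  have hcost : chargCost T n η ℓ0 ℓe = S * c ^ n + betaC T n η ℓ0 tb := by
    rw [chargCost, hsplitT (fun t => η t * (ℓ0 t + ℓe t) ^ n)]
    have h1 : ∑ t ∈ Finset.Icc 1 tb, η t * (ℓ0 t + ℓe t) ^ n = S * c ^ n := by
      rw [hS_def, Finset.sum_mul]
      apply Finset.sum_congr rfl
      intro t ht
      obtain ⟨ha, hb⟩ := Finset.mem_Icc.mp ht
      have hηt := hη t (hmemT t ha hb)
      rw [hval t ha hb, Real.mul_rpow (Real.rpow_pos_of_pos hηt _).le hcpos.le,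
        ← Real.rpow_mul hηt.le]
      have hx : (1:ℝ) + -p * n = -p := by rw [hp_def]; field_simp; ring
      have he : η t * η t ^ (-p * n) = η t ^ (-p) := by
        rw [← Real.rpow_one_add' hηt.le (by rw [hx]; exact neg_ne_zero.mpr hp.ne'), hx]
      rw [← mul_assoc, he]
    have h2 : ∑ t ∈ Finset.Icc (tb + 1) T, η t * (ℓ0 t + ℓe t) ^ n
        = betaC T n η ℓ0 tb := by
      rw [betaC]
      apply Finset.sum_congr rfl
      intro t ht
      obtain ⟨ha, _⟩ := Finset.mem_Icc.mp ht
      rw [hℓe t, if_neg (by omega), add_zero]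
    rw [h1, h2]
  -- marginal cost bound on later slots
  have hlater : ∀ t : ℕ, tb + 1 ≤ t → t ≤ T → c ^ (n - 1) ≤ η t * ℓ0 t ^ (n - 1) := by
    intro t ht1 ht2
    have htbT' : tb < T := by omega
    have hmem1 : tb + 1 ∈ Finset.Icc 1 T := Finset.mem_Icc.mpr ⟨by omega, by omega⟩
    have hLe := hhigh htbT'
    have hLtb : Lth n η ℓ0 tb = η (tb + 1) ^ p * ℓ0 (tb + 1) * S - alphaC ℓ0 tb := by
      rw [Lth, if_neg (by omega), ← hp_def, hratio (η (tb + 1)) (hη _ hmem1)]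
      ring
    rw [hLtb] at hLe
    have hcle : c ≤ η (tb + 1) ^ p * ℓ0 (tb + 1) := by
      have h' : c * S ≤ η (tb + 1) ^ p * ℓ0 (tb + 1) * S := by rw [hcS]; linarith
      exact le_of_mul_le_mul_right h' hSpos
    have h1 := Real.rpow_le_rpow hcpos.le hcle hn1.le
    rw [wf_rpow_helper (hη _ hmem1) (hℓ0 _ hmem1)
      (show p * (n - 1) = 1 from by rw [hp_def]; field_simp)] at h1
    exact h1.trans (hord (tb + 1) t (by omega) ht1 ht2)
  -- lower bound for any feasible profile
  have hlb : ∀ g : ℕ → ℝ, ChargFeasible T Le g →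
      S * c ^ n + betaC T n η ℓ0 tb ≤ chargCost T n η ℓ0 g := by
    rintro g ⟨hgnn, hgsum⟩
    have hterm : ∀ t ∈ Finset.Icc 1 T,
        η t * (ℓ0 t + ℓe t) ^ n + n * c ^ (n - 1) * (g t - ℓe t)
          ≤ η t * (ℓ0 t + g t) ^ n := by
      intro t ht
      obtain ⟨ht1, ht2⟩ := Finset.mem_Icc.mp ht
      have hηt := hη t ht
      have hℓ0t := hℓ0 t ht
      have hant : 0 ≤ ℓ0 t + ℓe t := add_nonneg hℓ0t (hnonneg t ht)
      have hxnt : 0 ≤ ℓ0 t + g t := add_nonneg hℓ0t (hgnn t ht)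
      have hg2 := mul_le_mul_of_nonneg_left (wf_grad_ineq hn hant hxnt) hηt.le
      by_cases h2 : t ≤ tb
      · have hcoef : η t * (ℓ0 t + ℓe t) ^ (n - 1) = c ^ (n - 1) := by
          rw [hval t ht1 h2,
            Real.mul_rpow (Real.rpow_pos_of_pos hηt _).le hcpos.le,
            ← Real.rpow_mul hηt.le,
            show -p * (n - 1) = -1 from by rw [hp_def]; field_simp,
            Real.rpow_neg_one, ← mul_assoc, mul_inv_cancel₀ hηt.ne', one_mul]
        calc η t * (ℓ0 t + ℓe t) ^ n + n * c ^ (n - 1) * (g t - ℓe t)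
            = η t * ((ℓ0 t + ℓe t) ^ n
                + n * (ℓ0 t + ℓe t) ^ (n - 1) * ((ℓ0 t + g t) - (ℓ0 t + ℓe t))) := by
              rw [← hcoef]; ring
          _ ≤ η t * (ℓ0 t + g t) ^ n := hg2
      · have hℓet : ℓe t = 0 := by rw [hℓe t, if_neg h2]
        have hc1 := hlater t (by omega) ht2
        have hgt := hgnn t ht
        have hn0 : (0:ℝ) ≤ n := by linarith
        have hstep : n * c ^ (n - 1) * g t ≤ n * (η t * ℓ0 t ^ (n - 1)) * g t := by
          apply mul_le_mul_of_nonneg_right _ hgt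
          apply mul_le_mul_of_nonneg_left hc1 hn0
        calc η t * (ℓ0 t + ℓe t) ^ n + n * c ^ (n - 1) * (g t - ℓe t)
            = η t * (ℓ0 t + ℓe t) ^ n + n * c ^ (n - 1) * g t := by rw [hℓet]; ring
          _ ≤ η t * (ℓ0 t + ℓe t) ^ n + n * (η t * ℓ0 t ^ (n - 1)) * g t := by
              linarith
          _ = η t * ((ℓ0 t + ℓe t) ^ n
                + n * (ℓ0 t + ℓe t) ^ (n - 1) * ((ℓ0 t + g t) - (ℓ0 t + ℓe t))) := by
              rw [hℓet]; ring_nf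
          _ ≤ η t * (ℓ0 t + g t) ^ n := hg2
    have hsumle := Finset.sum_le_sum hterm
    rw [Finset.sum_add_distrib] at hsumle
    have hz : ∑ t ∈ Finset.Icc 1 T, n * c ^ (n - 1) * (g t - ℓe t) = 0 := by
      rw [← Finset.mul_sum, Finset.sum_sub_distrib, hgsum, hsum, sub_self, mul_zero]
    rw [hz, add_zero] at hsumle
    calc S * c ^ n + betaC T n η ℓ0 tb = chargCost T n η ℓ0 ℓe := hcost.symm
      _ ≤ chargCost T n η ℓ0 g := hsumle
  have hmemset : S * c ^ n + betaC T n η ℓ0 tb ∈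
      {v | ∃ g, ChargFeasible T Le g ∧ chargCost T n η ℓ0 g = v} :=
    ⟨ℓe, ⟨hnonneg, hsum⟩, hcost⟩
  rw [hcost, Vopt]
  refine le_antisymm ?_ ?_
  · exact le_csInf ⟨_, hmemset⟩ (by rintro y ⟨g, hg, rfl⟩; exact hlb g hg)
  · exact csInf_le ⟨_, by rintro y ⟨g, hg, rfl⟩; exact hlb g hg⟩ hmemset
end

section
/- The energy thresholds form a nondecreasing sequence starting from zero: 0 = L_e^{(0)} ≤ L_e^{(1)} ≤ … ≤ L_e^{(T−1)}. -/
open Finset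

lemma aux_rpow_mono (n : ℝ) (hn : (2:ℝ) ≤ n) {ηa ηb ηs ℓa ℓb : ℝ}
    (hηa : 0 < ηa) (hηb : 0 < ηb) (hηs : 0 < ηs)
    (hℓa : 0 ≤ ℓa) (hℓb : 0 ≤ ℓb)
    (h : ηa * ℓa ^ (n - 1) ≤ ηb * ℓb ^ (n - 1)) :
    (ηa / ηs) ^ (1 / (n - 1)) * ℓa ≤ (ηb / ηs) ^ (1 / (n - 1)) * ℓb := by
  have hpos : 0 < n - 1 := by linarith
  have hne : n - 1 ≠ 0 := ne_of_gt hpos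
  have he : (0:ℝ) ≤ 1 / (n - 1) := by positivity
  have key : ηa ^ (1 / (n - 1)) * ℓa ≤ ηb ^ (1 / (n - 1)) * ℓb := by
    have h1 := Real.rpow_le_rpow (by positivity) h he
    rwa [Real.mul_rpow hηa.le (Real.rpow_nonneg hℓa _),
      Real.mul_rpow hηb.le (Real.rpow_nonneg hℓb _),
      ← Real.rpow_mul hℓa, ← Real.rpow_mul hℓb,
      mul_one_div, div_self hne, Real.rpow_one, Real.rpow_one] at h1
  rw [Real.div_rpow hηa.le hηs.le, Real.div_rpow hηb.le hηs.le,
    div_mul_eq_mul_div, div_mul_eq_mul_div,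
    div_le_div_iff_of_pos_right (Real.rpow_pos_of_pos hηs _)]
  exact key

/-- the energy thresholds form a nondecreasing sequence starting
from zero: `0 = L_e^{(0)} ≤ L_e^{(1)} ≤ … ≤ L_e^{(T-1)}`. -/
theorem energy_thresholds_monotone
    (T : ℕ) (n : ℝ) (η ℓ0 : ℕ → ℝ)
    (hT : 2 ≤ T) (hn : (2 : ℝ) ≤ n)
    (hη : ∀ t ∈ Finset.Icc 1 T, 0 < η t)
    (hℓ0 : ∀ t ∈ Finset.Icc 1 T, 0 ≤ ℓ0 t)
    (hord : ∀ s t : ℕ, 1 ≤ s → s ≤ t → t ≤ T →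
      η s * ℓ0 s ^ (n - 1) ≤ η t * ℓ0 t ^ (n - 1)) :
    Lth n η ℓ0 0 = 0 ∧ ∀ t : ℕ, t < T - 1 → Lth n η ℓ0 t ≤ Lth n η ℓ0 (t + 1) := by
  have hLth0 : Lth n η ℓ0 0 = 0 := by simp [Lth]
  refine ⟨hLth0, ?_⟩
  intro t ht
  have ht2 : t + 2 ≤ T := by omega
  have hn1 : (1:ℝ) ≤ n := by linarith
  have hmem : ∀ s : ℕ, 1 ≤ s → s ≤ T → s ∈ Finset.Icc 1 T := by
    intro s h1 h2; exact Finset.mem_Icc.mpr ⟨h1, h2⟩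
  have hη1 : ∀ s : ℕ, 1 ≤ s → s ≤ T → 0 < η s := fun s h1 h2 => hη s (hmem s h1 h2)
  have hℓ1 : ∀ s : ℕ, 1 ≤ s → s ≤ T → 0 ≤ ℓ0 s := fun s h1 h2 => hℓ0 s (hmem s h1 h2)
  rcases Nat.eq_zero_or_pos t with rfl | htpos
  · rw [hLth0, Lth]
    simp only [Nat.one_ne_zero, if_false, alphaC, Finset.Icc_self,
      Finset.sum_singleton, zero_add]
    have := aux_rpow_mono n hn (hη1 1 (by omega) (by omega)) (hη1 2 (by omega) hT)
      (hη1 1 (by omega) (by omega)) (hℓ1 1 (by omega) (by omega)) (hℓ1 2 (by omega) hT)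
      (hord 1 2 (by omega) (by omega) hT)
    rw [div_self (ne_of_gt (hη1 1 (by omega) (by omega))), Real.one_rpow, one_mul] at this
    linarith
  · have htne : t ≠ 0 := Nat.pos_iff_ne_zero.mp htpos
    rw [Lth, Lth, if_neg htne, if_neg (Nat.succ_ne_zero t)]
    have hsplitα : alphaC ℓ0 (t + 1) = alphaC ℓ0 t + ℓ0 (t + 1) := by
      rw [alphaC, alphaC, Finset.sum_Icc_succ_top (by omega)]
    have hsplitS : (∑ s ∈ Finset.Icc 1 (t + 1), (η (t + 1 + 1) / η s) ^ (1 / (n - 1)))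
        = (∑ s ∈ Finset.Icc 1 t, (η (t + 2) / η s) ^ (1 / (n - 1)))
          + (η (t + 2) / η (t + 1)) ^ (1 / (n - 1)) := by
      rw [Finset.sum_Icc_succ_top (by omega)]
    rw [hsplitα, hsplitS]
    have hkey : ∀ s ∈ Finset.Icc 1 t,
        (η (t + 1) / η s) ^ (1 / (n - 1)) * ℓ0 (t + 1)
          ≤ (η (t + 2) / η s) ^ (1 / (n - 1)) * ℓ0 (t + 2) := by
      intro s hs
      rw [Finset.mem_Icc] at hs
      exact aux_rpow_mono n hn (hη1 (t+1) (by omega) (by omega)) (hη1 (t+2) (by omega) ht2)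
        (hη1 s hs.1 (by omega)) (hℓ1 (t+1) (by omega) (by omega)) (hℓ1 (t+2) (by omega) ht2)
        (hord (t+1) (t+2) (by omega) (by omega) ht2)
    have hsum : (∑ s ∈ Finset.Icc 1 t, (η (t + 1) / η s) ^ (1 / (n - 1))) * ℓ0 (t + 1)
        ≤ (∑ s ∈ Finset.Icc 1 t, (η (t + 2) / η s) ^ (1 / (n - 1))) * ℓ0 (t + 2) := by
      rw [Finset.sum_mul, Finset.sum_mul]
      exact Finset.sum_le_sum hkey
    have hlast : ℓ0 (t + 1) ≤ (η (t + 2) / η (t + 1)) ^ (1 / (n - 1)) * ℓ0 (t + 2) := by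
      have := aux_rpow_mono n hn (hη1 (t+1) (by omega) (by omega)) (hη1 (t+2) (by omega) ht2)
        (hη1 (t+1) (by omega) (by omega)) (hℓ1 (t+1) (by omega) (by omega))
        (hℓ1 (t+2) (by omega) ht2) (hord (t+1) (t+2) (by omega) (by omega) ht2)
      rwa [div_self (ne_of_gt (hη1 (t+1) (by omega) (by omega))), Real.one_rpow, one_mul] at this
    have : t + 1 + 1 = t + 2 := rfl
    rw [this]
    nlinarith [hsum, hlast]
end

section
/- Assume ℓ_{0,1} > 0. Then the charging unit price λ_e is (strictly) increasing on (0, ∞) if and only if ∑_{t=1}^T η_t ℓ_{0,t}^n ≤ n · η_1 ℓ_{0,1}^{n−1} · ∑_{t=1}^T ℓ_{0,t} (equivalently, with ℓ̃_{0,t} = ℓ_{0,t}/ℓ_{0,1} and η̃_t = η_t/η_1, if and only if (∑_t η̃_t ℓ̃_{0,t}^n)/(∑_t ℓ̃_{0,t}) ≤ n). -/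
open Finset

section Tangent

variable {a x n : ℝ}

lemma rpow_tangent_lt_rpow_add (ha : 0 ≤ a) (hax : 0 ≤ a + x) (hx : x ≠ 0) (hn : 1 < n) :
    a ^ n + n * a ^ (n - 1) * x < (a + x) ^ n := by
  rcases ha.eq_or_lt with rfl | ha
  · rw [Real.zero_rpow (by linarith), Real.zero_rpow (by linarith), zero_add]
    simpa using Real.rpow_pos_of_pos (lt_of_le_of_ne (by simpa using hax) (Ne.symm hx)) n
  · have hs : -1 ≤ x / a := by rw [le_div_iff₀ ha]; linarith
    calc a ^ n + n * a ^ (n - 1) * x = a ^ n * (1 + n * (x / a)) := by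
          rw [Real.rpow_sub_one ha.ne']; field_simp
      _ < a ^ n * (1 + x / a) ^ n := by
          gcongr
          exact one_add_mul_self_lt_rpow_one_add hs (div_ne_zero hx ha.ne') hn
      _ = (a + x) ^ n := by
          rw [← Real.mul_rpow ha.le (by linarith), mul_one_add, mul_div_cancel₀ _ ha.ne']

lemma rpow_tangent_le_rpow_add (ha : 0 ≤ a) (hax : 0 ≤ a + x) (hn : 1 < n) :
    a ^ n + n * a ^ (n - 1) * x ≤ (a + x) ^ n := by
  rcases eq_or_ne x 0 with rfl | hx
  · simp
  · exact (rpow_tangent_lt_rpow_add ha hax hx hn).le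

lemma rpow_add_le_rpow_add_mul (ha : 0 ≤ a) (hx : 0 ≤ x) (hn : 1 < n) :
    (a + x) ^ n ≤ a ^ n + n * (a + x) ^ (n - 1) * x := by
  have := rpow_tangent_le_rpow_add (a := a + x) (x := -x) (by linarith) (by linarith) hn
  rw [add_neg_cancel_right] at this
  linarith

lemma rpow_tangent_gap_le {m : ℝ} (ha : 0 ≤ a) (hm : 0 ≤ m) (hmx : m ≤ x) (hn : 1 < n) :
    (a + m) ^ n - a ^ n - n * a ^ (n - 1) * m ≤ (a + x) ^ n - a ^ n - n * a ^ (n - 1) * x := by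
  have htangent := rpow_tangent_le_rpow_add (a := a + m) (x := x - m) (by linarith) (by linarith) hn
  rw [add_add_sub_cancel] at htangent
  have hslope : n * a ^ (n - 1) * (x - m) ≤ n * (a + m) ^ (n - 1) * (x - m) := by
    have : a ^ (n - 1) ≤ (a + m) ^ (n - 1) :=
      Real.rpow_le_rpow ha (by linarith) (by linarith)
    gcongr
  linarith

end Tangent

section Charging

variable {T : ℕ} {n L : ℝ} {η ℓ0 x : ℕ → ℝ}

lemma chargFeasible_single (hT : 1 ≤ T) (hL : 0 ≤ L) : ChargFeasible T L (Pi.single 1 L) := by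
  refine ⟨fun t _ => ?_, ?_⟩
  · rcases eq_or_ne t 1 with rfl | ht
    · simpa using hL
    · simp [ht]
  · rw [sum_pi_single']
    simp [hT]

lemma ChargFeasible.const_mul (hx : ChargFeasible T L x) {θ : ℝ} (hθ : 0 ≤ θ) :
    ChargFeasible T (θ * L) (fun t => θ * x t) :=
  ⟨fun t ht => mul_nonneg hθ (hx.1 t ht), by rw [← mul_sum, hx.2]⟩

lemma exists_le_of_chargFeasible (hT : 1 ≤ T) (hx : ChargFeasible T L x) :
    ∃ t ∈ Icc 1 T, L / T ≤ x t := by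
  refine exists_le_of_sum_le ⟨1, by simp [hT]⟩ ?_
  have hT0 : (T : ℝ) ≠ 0 := by positivity
  simp [hx.2, mul_div_cancel₀ _ hT0]

lemma Vopt_le_chargCost (hη : ∀ t ∈ Icc 1 T, 0 ≤ η t) (hℓ0 : ∀ t ∈ Icc 1 T, 0 ≤ ℓ0 t)
    (hx : ChargFeasible T L x) : Vopt T n η ℓ0 L ≤ chargCost T n η ℓ0 x := by
  refine csInf_le ⟨0, ?_⟩ ⟨x, hx, rfl⟩
  rintro _ ⟨y, hy, rfl⟩
  exact sum_nonneg fun t ht =>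
    mul_nonneg (hη t ht) (Real.rpow_nonneg (add_nonneg (hℓ0 t ht) (hy.1 t ht)) n)

lemma le_Vopt (hT : 1 ≤ T) (hL : 0 ≤ L) {b : ℝ}
    (h : ∀ x, ChargFeasible T L x → b ≤ chargCost T n η ℓ0 x) : b ≤ Vopt T n η ℓ0 L :=
  le_csInf ⟨_, _, chargFeasible_single hT hL, rfl⟩ (by rintro _ ⟨x, hx, rfl⟩; exact h x hx)

lemma Vopt_le (hT : 1 ≤ T) (hn : 1 < n) (hη : ∀ t ∈ Icc 1 T, 0 ≤ η t)
    (hℓ0 : ∀ t ∈ Icc 1 T, 0 ≤ ℓ0 t) (hL : 0 ≤ L) :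
    Vopt T n η ℓ0 L ≤
      ∑ t ∈ Icc 1 T, η t * ℓ0 t ^ n + n * (η 1 * (ℓ0 1 + L) ^ (n - 1)) * L := by
  have h1 : 1 ∈ Icc 1 T := by simp [hT]
  have hcost : chargCost T n η ℓ0 (Pi.single 1 L) =
      ∑ t ∈ Icc 1 T, η t * ℓ0 t ^ n + η 1 * ((ℓ0 1 + L) ^ n - ℓ0 1 ^ n) := by
    rw [chargCost, ← sub_eq_iff_eq_add', ← sum_sub_distrib, sum_eq_single_of_mem 1 h1]
    · simp [mul_sub]
    · intro t _ ht
      simp [ht]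
  have hslot : η 1 * ((ℓ0 1 + L) ^ n - ℓ0 1 ^ n) ≤ η 1 * (n * (ℓ0 1 + L) ^ (n - 1) * L) := by
    have := rpow_add_le_rpow_add_mul (hℓ0 1 h1) hL hn
    gcongr
    · exact hη 1 h1
    · linarith
  calc Vopt T n η ℓ0 L ≤ chargCost T n η ℓ0 (Pi.single 1 L) :=
        Vopt_le_chargCost hη hℓ0 (chargFeasible_single hT hL)
    _ ≤ _ := by rw [hcost]; linarith

lemma chargCost_const_mul_le (hn : 1 ≤ n) (hη : ∀ t ∈ Icc 1 T, 0 ≤ η t)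
    (hℓ0 : ∀ t ∈ Icc 1 T, 0 ≤ ℓ0 t) (hx : ChargFeasible T L x) {θ : ℝ} (hθ0 : 0 ≤ θ)
    (hθ1 : θ ≤ 1) :
    chargCost T n η ℓ0 (fun t => θ * x t) ≤
      (1 - θ) * ∑ t ∈ Icc 1 T, η t * ℓ0 t ^ n + θ * chargCost T n η ℓ0 x := by
  rw [chargCost, chargCost, mul_sum, mul_sum, ← sum_add_distrib]
  refine sum_le_sum fun t ht => ?_
  have hconv : (ℓ0 t + θ * x t) ^ n ≤ (1 - θ) * ℓ0 t ^ n + θ * (ℓ0 t + x t) ^ n := by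
    have := (convexOn_rpow hn).2 (Set.mem_Ici.2 (hℓ0 t ht))
      (Set.mem_Ici.2 (add_nonneg (hℓ0 t ht) (hx.1 t ht))) (sub_nonneg.2 hθ1) hθ0 (by ring)
    simpa [show (1 - θ) * ℓ0 t + θ * (ℓ0 t + x t) = ℓ0 t + θ * x t by ring] using this
  calc η t * (ℓ0 t + θ * x t) ^ n ≤ η t * ((1 - θ) * ℓ0 t ^ n + θ * (ℓ0 t + x t) ^ n) :=
        mul_le_mul_of_nonneg_left hconv (hη t ht)
    _ = _ := by ring

lemma Vopt_mul_le (hT : 1 ≤ T) (hn : 1 ≤ n) (hη : ∀ t ∈ Icc 1 T, 0 ≤ η t)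
    (hℓ0 : ∀ t ∈ Icc 1 T, 0 ≤ ℓ0 t) (hL : 0 ≤ L) {θ : ℝ} (hθ0 : 0 < θ) (hθ1 : θ ≤ 1) :
    Vopt T n η ℓ0 (θ * L) ≤
      (1 - θ) * ∑ t ∈ Icc 1 T, η t * ℓ0 t ^ n + θ * Vopt T n η ℓ0 L := by
  have h : (Vopt T n η ℓ0 (θ * L) - (1 - θ) * ∑ t ∈ Icc 1 T, η t * ℓ0 t ^ n) / θ ≤
      Vopt T n η ℓ0 L := by
    refine le_Vopt hT hL fun x hx => ?_
    rw [div_le_iff₀' hθ0]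
    linarith [Vopt_le_chargCost (n := n) hη hℓ0 (hx.const_mul hθ0.le),
      chargCost_const_mul_le hn hη hℓ0 hx hθ0.le hθ1]
  rw [div_le_iff₀' hθ0] at h
  linarith

lemma chargCost_ge {μ : ℝ} (hn : 1 < n) (hη : ∀ t ∈ Icc 1 T, 0 ≤ η t)
    (hℓ0 : ∀ t ∈ Icc 1 T, 0 ≤ ℓ0 t) (hμ : ∀ t ∈ Icc 1 T, μ ≤ η t * ℓ0 t ^ (n - 1))
    (hx : ChargFeasible T L x) {s : ℕ} (hs : s ∈ Icc 1 T) :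
    ∑ t ∈ Icc 1 T, η t * ℓ0 t ^ n + n * μ * L +
        η s * ((ℓ0 s + x s) ^ n - ℓ0 s ^ n - n * ℓ0 s ^ (n - 1) * x s) ≤
      chargCost T n η ℓ0 x := by
  set gap : ℕ → ℝ := fun t => η t * ((ℓ0 t + x t) ^ n - ℓ0 t ^ n - n * ℓ0 t ^ (n - 1) * x t)
  have hgap : ∀ t ∈ Icc 1 T, 0 ≤ gap t := fun t ht =>
    mul_nonneg (hη t ht) (by
      linarith [rpow_tangent_le_rpow_add (hℓ0 t ht) (add_nonneg (hℓ0 t ht) (hx.1 t ht)) hn])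
  have hterm : ∀ t ∈ Icc 1 T, η t * ℓ0 t ^ n + n * μ * x t + gap t ≤ η t * (ℓ0 t + x t) ^ n := by
    intro t ht
    have hslope : n * μ * x t ≤ n * (η t * ℓ0 t ^ (n - 1)) * x t := by
      have := hμ t ht
      have := hx.1 t ht
      gcongr
    have hsplit : η t * (ℓ0 t + x t) ^ n =
        η t * ℓ0 t ^ n + n * (η t * ℓ0 t ^ (n - 1)) * x t + gap t := by ring
    linarith
  calc ∑ t ∈ Icc 1 T, η t * ℓ0 t ^ n + n * μ * L + gap s
      ≤ ∑ t ∈ Icc 1 T, η t * ℓ0 t ^ n + n * μ * L + ∑ t ∈ Icc 1 T, gap t := by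
        gcongr
        exact single_le_sum hgap hs
    _ = ∑ t ∈ Icc 1 T, (η t * ℓ0 t ^ n + n * μ * x t + gap t) := by
        rw [sum_add_distrib, sum_add_distrib, ← mul_sum, hx.2]
    _ ≤ chargCost T n η ℓ0 x := sum_le_sum hterm

lemma exists_pos_add_le_chargCost {μ : ℝ} (hT : 1 ≤ T) (hn : 1 < n)
    (hη : ∀ t ∈ Icc 1 T, 0 < η t) (hℓ0 : ∀ t ∈ Icc 1 T, 0 ≤ ℓ0 t)
    (hμ : ∀ t ∈ Icc 1 T, μ ≤ η t * ℓ0 t ^ (n - 1)) (hL : 0 < L) :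
    ∃ g > 0, ∀ x, ChargFeasible T L x →
      ∑ t ∈ Icc 1 T, η t * ℓ0 t ^ n + n * μ * L + g ≤ chargCost T n η ℓ0 x := by
  -- Some slot receives at least the average load `L / T`, and the tangent-line gap only grows.
  have hm : 0 < L / T := div_pos hL (by exact_mod_cast hT)
  set δ : ℕ → ℝ := fun t =>
    η t * ((ℓ0 t + L / T) ^ n - ℓ0 t ^ n - n * ℓ0 t ^ (n - 1) * (L / T))
  obtain ⟨t₀, ht₀, hmin⟩ := exists_min_image (Icc 1 T) δ ⟨1, by simp [hT]⟩
  refine ⟨δ t₀, mul_pos (hη t₀ ht₀) ?_, fun x hx => ?_⟩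
  · linarith [rpow_tangent_lt_rpow_add (hℓ0 t₀ ht₀) (by linarith [hℓ0 t₀ ht₀]) hm.ne' hn]
  · obtain ⟨s, hs, hxs⟩ := exists_le_of_chargFeasible hT hx
    have hδs : δ s ≤ η s * ((ℓ0 s + x s) ^ n - ℓ0 s ^ n - n * ℓ0 s ^ (n - 1) * x s) :=
      mul_le_mul_of_nonneg_left (rpow_tangent_gap_le (hℓ0 s hs) hm.le hxs hn) (hη s hs).le
    linarith [hmin s hs, chargCost_ge hn (fun t ht => (hη t ht).le) hℓ0 hμ hx hs]

lemma lt_Vopt {μ : ℝ} (hT : 1 ≤ T) (hn : 1 < n) (hη : ∀ t ∈ Icc 1 T, 0 < η t)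
    (hℓ0 : ∀ t ∈ Icc 1 T, 0 ≤ ℓ0 t) (hμ : ∀ t ∈ Icc 1 T, μ ≤ η t * ℓ0 t ^ (n - 1))
    (hL : 0 < L) : ∑ t ∈ Icc 1 T, η t * ℓ0 t ^ n + n * μ * L < Vopt T n η ℓ0 L := by
  obtain ⟨g, hg, h⟩ := exists_pos_add_le_chargCost hT hn hη hℓ0 hμ hL
  linarith [le_Vopt hT hL.le h]

end Charging

section UnitPrice

open Filter Topology

variable {f : ℝ → ℝ} {A v : ℝ}

lemma strictMonoOn_div_add_of_le_of_lt (hA : 0 < A)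
    (hconv : ∀ L > 0, ∀ θ, 0 < θ → θ < 1 → f (θ * L) ≤ (1 - θ) * v + θ * f L)
    (hgt : ∀ L > 0, v * (L + A) < A * f L) :
    StrictMonoOn (fun L => f L / (L + A)) (Set.Ioi 0) := by
  intro L₁ hL₁ L₂ hL₂ h12
  rw [Set.mem_Ioi] at hL₁ hL₂
  set θ := L₁ / L₂
  have hθL : θ * L₂ = L₁ := div_mul_cancel₀ _ hL₂.ne'
  have hθ1 : θ < 1 := (div_lt_one hL₂).2 h12
  have hf₁ := hconv L₂ hL₂ θ (div_pos hL₁ hL₂) hθ1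
  rw [hθL] at hf₁
  show f L₁ / (L₁ + A) < f L₂ / (L₂ + A)
  rw [div_lt_div_iff₀ (by linarith) (by linarith)]
  calc f L₁ * (L₂ + A) ≤ ((1 - θ) * v + θ * f L₂) * (L₂ + A) := by gcongr
    _ < f L₂ * (L₁ + A) := by
        rw [← hθL]
        nlinarith [mul_lt_mul_of_pos_left (hgt L₂ hL₂) (sub_pos.2 hθ1)]

lemma le_mul_of_monotoneOn_div_add {K : ℝ → ℝ} {c : ℝ} (hA : 0 < A)
    (hmono : MonotoneOn (fun L => f L / (L + A)) (Set.Ioi 0))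
    (hlow : ∀ L > 0, v + c * L ≤ f L) (hup : ∀ L > 0, f L ≤ v + K L * L)
    (hK : Tendsto K (𝓝[>] 0) (𝓝 c)) : v ≤ c * A := by
  have hlim : Tendsto (fun L => (v + c * L) / (L + A)) (𝓝[>] 0) (𝓝 (v / A)) := by
    have : Tendsto (fun L => (v + c * L) / (L + A)) (𝓝 0) (𝓝 ((v + c * 0) / (0 + A))) :=
      (tendsto_const_nhds.add (tendsto_id.const_mul c)).div (tendsto_id.add_const A)
        (by simpa using hA.ne')
    simpa using this.mono_left nhdsWithin_le_nhds
  have hKA : ∀ L > 0, v ≤ K L * A := by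
    intro L hL
    have hev : ∀ᶠ l in 𝓝[>] 0, (v + c * l) / (l + A) ≤ f L / (L + A) := by
      filter_upwards [Ioo_mem_nhdsGT hL] with l hl
      exact (div_le_div_of_nonneg_right (hlow l hl.1) (by linarith [hl.1])).trans
        (hmono hl.1 hL hl.2.le)
    have h := le_of_tendsto hlim hev
    rw [div_le_div_iff₀ hA (by linarith)] at h
    have := hup L hL
    nlinarith
  exact ge_of_tendsto (hK.mul_const A) (eventually_nhdsWithin_of_forall hKA)

end UnitPrice

/-- Prop. 2: for `ℓ_{0,1} > 0`, the charging unit price `λ_e` is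
(strictly) increasing on `(0, ∞)` if and only if
`∑_t η_t ℓ_{0,t}^n ≤ n · η_1 ℓ_{0,1}^{n-1} · ∑_t ℓ_{0,t}`. -/
theorem lamE_strictMono_iff
    (T : ℕ) (n : ℝ) (η ℓ0 : ℕ → ℝ)
    (hT : 2 ≤ T) (hn : (2 : ℝ) ≤ n)
    (hη : ∀ t ∈ Finset.Icc 1 T, 0 < η t)
    (hℓ0 : ∀ t ∈ Finset.Icc 1 T, 0 ≤ ℓ0 t)
    (hord : ∀ s t : ℕ, 1 ≤ s → s ≤ t → t ≤ T →
      η s * ℓ0 s ^ (n - 1) ≤ η t * ℓ0 t ^ (n - 1))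
    (h01 : 0 < ℓ0 1) :
    StrictMonoOn (lamE T n η ℓ0) (Set.Ioi 0) ↔
      ∑ t ∈ Finset.Icc 1 T, η t * ℓ0 t ^ n ≤
        n * (η 1 * ℓ0 1 ^ (n - 1)) * ∑ t ∈ Finset.Icc 1 T, ℓ0 t := by
  have hT1 : 1 ≤ T := by omega
  have hn1 : 1 < n := by linarith
  have hη0 : ∀ t ∈ Icc 1 T, 0 ≤ η t := fun t ht => (hη t ht).le
  have hA : 0 < alphaC ℓ0 T := h01.trans_le (single_le_sum hℓ0 (by simp [hT1]))
  have hgt := fun L (hL : 0 < L) => lt_Vopt hT1 hn1 hη hℓ0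
    (fun t ht => hord 1 t le_rfl (mem_Icc.1 ht).1 (mem_Icc.1 ht).2) hL
  constructor
  · intro hmono
    have hK : Continuous fun L => n * (η 1 * (ℓ0 1 + L) ^ (n - 1)) := by
      have := Real.continuous_rpow_const (q := n - 1) (by linarith)
      fun_prop
    refine le_mul_of_monotoneOn_div_add hA hmono.monotoneOn (fun L hL => (hgt L hL).le)
      (fun L hL => Vopt_le hT1 hn1 hη0 hℓ0 hL.le) ?_
    simpa using (hK.tendsto 0).mono_left nhdsWithin_le_nhds
  · intro hcond
    refine strictMonoOn_div_add_of_le_of_lt hA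
      (fun L hL θ hθ0 hθ1 => Vopt_mul_le hT1 hn1.le hη0 hℓ0 hL.le hθ0 hθ1.le) fun L hL => ?_
    change _ ≤ _ * alphaC ℓ0 T at hcond
    nlinarith [mul_lt_mul_of_pos_left (hgt L hL) hA, mul_le_mul_of_nonneg_right hcond hL.le]
end

section
/- If all nonflexible loads vanish (ℓ_{0,t} = 0 for every t), then for every L_e > 0 the charging unit price is λ_e(L_e) = (∑_{s=1}^T η_s^{−1/(n−1)})^{−(n−1)} · L_e^{n−1}; in particular λ_e is strictly increasing on (0, ∞). -/
open Finset

/-- if all nonflexible loads vanish, then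
`λ_e(L_e) = (∑_s η_s^{-1/(n-1)})^{-(n-1)} · L_e^{n-1}` for every `L_e > 0`;
in particular `λ_e` is strictly increasing on `(0, ∞)`. -/
theorem lamE_of_zero_nonflexible_load
    (T : ℕ) (n : ℝ) (η ℓ0 : ℕ → ℝ)
    (hT : 2 ≤ T) (hn : (2 : ℝ) ≤ n)
    (hη : ∀ t ∈ Finset.Icc 1 T, 0 < η t)
    (h0 : ∀ t ∈ Finset.Icc 1 T, ℓ0 t = 0) :
    (∀ Le : ℝ, 0 < Le →
      lamE T n η ℓ0 Le =
        (∑ s ∈ Finset.Icc 1 T, η s ^ (-(1 / (n - 1)))) ^ (-(n - 1)) * Le ^ (n - 1)) ∧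
    StrictMonoOn (lamE T n η ℓ0) (Set.Ioi 0) := by
  have hn1 : (1:ℝ) < n := by linarith
  have hn0 : (0:ℝ) < n := by linarith
  have hn1' : (0:ℝ) < n - 1 := by linarith
  set S : ℝ := ∑ s ∈ Finset.Icc 1 T, η s ^ (-(1 / (n - 1))) with hS
  have hmem1 : (1:ℕ) ∈ Finset.Icc 1 T := by
    simp only [Finset.mem_Icc]; omega
  have hSpos : 0 < S :=
    Finset.sum_pos (fun s hs => Real.rpow_pos_of_pos (hη s hs) _) ⟨1, hmem1⟩
  have hCpos : 0 < S ^ (-(n - 1)) := Real.rpow_pos_of_pos hSpos _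
  have hα : alphaC ℓ0 T = 0 := Finset.sum_eq_zero h0
  have hcost : ∀ ℓe : ℕ → ℝ,
      chargCost T n η ℓ0 ℓe = ∑ t ∈ Finset.Icc 1 T, η t * ℓe t ^ n := by
    intro ℓe
    exact Finset.sum_congr rfl fun t ht => by rw [h0 t ht, zero_add]
  -- the value function
  have hV : ∀ Le : ℝ, 0 < Le → Vopt T n η ℓ0 Le = S ^ (-(n - 1)) * Le ^ n := by
    intro Le hLe
    -- the optimal profile
    set x : ℕ → ℝ := fun t => Le * η t ^ (-(1 / (n - 1))) / S with hx
    have hxfeas : ChargFeasible T Le x := by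
      constructor
      · intro t ht
        have h1 : 0 < η t := hη t ht
        have h2 : 0 < η t ^ (-(1 / (n - 1))) := Real.rpow_pos_of_pos h1 _
        positivity
      · simp only [hx]
        rw [← Finset.sum_div, ← Finset.mul_sum, ← hS]
        field_simp
    have hxcost : ∑ t ∈ Finset.Icc 1 T, η t * x t ^ n = S ^ (-(n - 1)) * Le ^ n := by
      have hterm : ∀ t ∈ Finset.Icc 1 T,
          η t * x t ^ n = η t ^ (-(1 / (n - 1))) * Le ^ n / S ^ n := by
        intro t ht
        have h1 : 0 < η t := hη t ht
        have h2 : (0:ℝ) ≤ Le * η t ^ (-(1 / (n - 1))) := by positivity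
        simp only [hx]
        rw [Real.div_rpow h2 hSpos.le, Real.mul_rpow hLe.le (Real.rpow_pos_of_pos h1 _).le]
        rw [← Real.rpow_mul h1.le]
        have hexp : η t * η t ^ (-(1 / (n - 1)) * n) = η t ^ (-(1 / (n - 1))) := by
          have hne : n - 1 ≠ 0 := hn1'.ne'
          have h3 : η t ^ (1 + -(1/(n-1))*n) = η t ^ (-(1/(n-1))) := by
            congr 1
            field_simp
            ring
          rw [Real.rpow_add h1, Real.rpow_one] at h3
          exact h3
        rw [show η t * (Le ^ n * η t ^ (-(1 / (n - 1)) * n) / S ^ n) =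
          (η t * η t ^ (-(1 / (n - 1)) * n)) * Le ^ n / S ^ n from by ring, hexp]
      rw [Finset.sum_congr rfl hterm, ← Finset.sum_div, ← Finset.sum_mul, ← hS]
      rw [div_eq_iff (by positivity : S ^ n ≠ 0)]
      rw [mul_right_comm, ← Real.rpow_add hSpos,
        show -(n - 1) + n = (1:ℝ) by ring, Real.rpow_one]
    -- lower bound via Hölder
    have hlb : ∀ c ∈ {c | ∃ ℓe, ChargFeasible T Le ℓe ∧ chargCost T n η ℓ0 ℓe = c},
        S ^ (-(n - 1)) * Le ^ n ≤ c := by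
      rintro c ⟨ℓe, ⟨hpos, hsum⟩, rfl⟩
      rw [hcost]
      set c' : ℝ := ∑ t ∈ Finset.Icc 1 T, η t * ℓe t ^ n with hc'
      have hc'nn : 0 ≤ c' :=
        Finset.sum_nonneg fun t ht => by
          have := hη t ht; have := hpos t ht; positivity
      have hpq : Real.HolderConjugate n (n / (n - 1)) := Real.HolderConjugate.conjExponent hn1
      have key := Real.inner_le_Lp_mul_Lq_of_nonneg (Finset.Icc 1 T)
        (f := fun t => η t ^ (1 / n) * ℓe t) (g := fun t => η t ^ (-(1 / n))) hpq
        (fun t ht => by have := hη t ht; have := hpos t ht; positivity)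
        (fun t ht => (Real.rpow_pos_of_pos (hη t ht) _).le)
      have e1 : ∑ t ∈ Finset.Icc 1 T, (η t ^ (1 / n) * ℓe t) * η t ^ (-(1 / n)) = Le := by
        rw [← hsum]
        refine Finset.sum_congr rfl fun t ht => ?_
        have h1 : 0 < η t := hη t ht
        rw [mul_comm (η t ^ (1/n)) (ℓe t), mul_assoc, ← Real.rpow_add h1]
        simp
      have e2 : ∑ t ∈ Finset.Icc 1 T, (η t ^ (1 / n) * ℓe t) ^ n = c' := by
        refine Finset.sum_congr rfl fun t ht => ?_
        have h1 : 0 < η t := hη t ht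
        rw [Real.mul_rpow (Real.rpow_pos_of_pos h1 _).le (hpos t ht)]
        rw [← Real.rpow_mul h1.le, one_div, inv_mul_cancel₀ hn0.ne', Real.rpow_one]
      have e3 : ∑ t ∈ Finset.Icc 1 T, (η t ^ (-(1 / n))) ^ (n / (n - 1)) = S := by
        refine Finset.sum_congr rfl fun t ht => ?_
        have h1 : 0 < η t := hη t ht
        rw [← Real.rpow_mul h1.le]
        congr 1
        field_simp
      rw [e1, e2, e3] at key
      -- key : Le ≤ c' ^ (1/n) * S ^ ((n-1)/n)
      have h1q : 1 / (n / (n - 1)) = (n - 1) / n := by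
        rw [one_div_div]
      rw [h1q] at key
      have key2 : Le ^ n ≤ c' * S ^ (n - 1) := by
        calc Le ^ n ≤ (c' ^ (1/n) * S ^ ((n-1)/n)) ^ n :=
              Real.rpow_le_rpow hLe.le key hn0.le
          _ = c' * S ^ (n - 1) := by
              rw [Real.mul_rpow (by positivity) (by positivity),
                ← Real.rpow_mul hc'nn, ← Real.rpow_mul hSpos.le,
                one_div, inv_mul_cancel₀ hn0.ne', Real.rpow_one,
                div_mul_cancel₀ _ hn0.ne']
      calc S ^ (-(n-1)) * Le ^ n ≤ S ^ (-(n-1)) * (c' * S ^ (n-1)) :=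
            mul_le_mul_of_nonneg_left key2 hCpos.le
        _ = c' * (S ^ (-(n-1)) * S ^ (n-1)) := by ring
        _ = c' := by
            rw [← Real.rpow_add hSpos, neg_add_cancel, Real.rpow_zero, mul_one]
    have hmemset : S ^ (-(n - 1)) * Le ^ n ∈
        {c | ∃ ℓe, ChargFeasible T Le ℓe ∧ chargCost T n η ℓ0 ℓe = c} :=
      ⟨x, hxfeas, by rw [hcost, hxcost]⟩
    refine le_antisymm (csInf_le ⟨_, hlb⟩ hmemset) (le_csInf ⟨_, hmemset⟩ hlb)
  -- the unit-price formula
  have hmain : ∀ Le : ℝ, 0 < Le →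
      lamE T n η ℓ0 Le = S ^ (-(n - 1)) * Le ^ (n - 1) := by
    intro Le hLe
    unfold lamE
    rw [hV Le hLe, hα, add_zero, mul_div_assoc]
    congr 1
    rw [show Le ^ (n - 1) = Le ^ n / Le by rw [Real.rpow_sub hLe, Real.rpow_one]]
  refine ⟨hmain, ?_⟩
  intro a ha b hb hab
  rw [Set.mem_Ioi] at ha hb
  rw [hmain a ha, hmain b hb]
  exact mul_lt_mul_of_pos_left (Real.rpow_lt_rpow ha.le hab hn1') hCpos
end

section
/- Assume every travel-time function d_a is continuous and the charging unit price function λ_e : [0, ∞) → ℝ is continuous. Then every local minimum of the Beckmann function B over the feasible set of path flows is a Wardrop Equilibrium. -/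
open Finset MeasureTheory

/-- The data of the multiclass (EV/GV) routing game with coupled charging.
Vehicle classes are indexed by `Bool`: `true` is the electric class (e) and
`false` is the gasoline class (g). Paths are gathered in the type `R`, the
origin–destination pair of a path `r` being `od r` (so `R_k = od ⁻¹' {k}`). -/
structure RoutingGame where
  /-- arcs -/
  A : Type
  finA : Fintype A
  /-- paths -/
  R : Type
  finR : Fintype R
  /-- origin–destination pairs -/
  K : Type
  /-- the O-D pair of each path -/
  od : R → K
  /-- each O-D pair has at least one path -/
  od_surj : Function.Surjective od
  /-- arc lengths -/
  len : A → ℝ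
  len_pos : ∀ a, 0 < len a
  /-- travel demands -/
  D : K → ℝ
  D_nonneg : ∀ k, 0 ≤ D k
  /-- arc–path incidence `δ_{a,r} ∈ {0,1}` -/
  δ : A → R → ℝ
  δ_mem : ∀ a r, δ a r = 0 ∨ δ a r = 1
  /-- class shares `X_e, X_g` -/
  X : Bool → ℝ
  X_nonneg : ∀ s, 0 ≤ X s
  /-- energy consumptions per distance unit `m_e, m_g` -/
  m : Bool → ℝ
  m_pos : ∀ s, 0 < m s
  /-- travel-time (congestion) functions `d_a` -/
  d : A → ℝ → ℝ
  /-- tolls `t_{a,s}` -/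
  toll : A → Bool → ℝ
  toll_nonneg : ∀ a s, 0 ≤ toll a s
  /-- value of time `τ` -/
  τ : ℝ
  τ_pos : 0 < τ
  /-- (constant) gasoline unit price `λ_g` -/
  lamg : ℝ
  lamg_nonneg : 0 ≤ lamg
  /-- charging unit price function `λ_e` -/
  lame : ℝ → ℝ

attribute [instance] RoutingGame.finA RoutingGame.finR

namespace RoutingGame

variable (G : RoutingGame)

/-- Arc flow of class `s`: `x_{a,s} = ∑_r δ_{a,r} f_{r,s}`. -/
noncomputable def arcFlow (f : G.R → Bool → ℝ) (a : G.A) (s : Bool) : ℝ :=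
  ∑ r, G.δ a r * f r s

/-- Total arc flow `x_a = x_{a,e} + x_{a,g}`. -/
noncomputable def totFlow (f : G.R → Bool → ℝ) (a : G.A) : ℝ :=
  G.arcFlow f a true + G.arcFlow f a false

open scoped Classical in
/-- Feasible path flows: nonnegative and meeting the demand `X_s D_k` of each
O-D pair `k` for each class `s`. -/
def Feasible (f : G.R → Bool → ℝ) : Prop :=
  (∀ r s, 0 ≤ f r s) ∧
  ∀ (k : G.K) (s : Bool), (∑ r, if G.od r = k then f r s else 0) = G.X s * G.D k

/-- Aggregate energy need of class `s`: `L_s = m_s ∑_a x_{a,s} l_a`. -/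
noncomputable def Lneed (f : G.R → Bool → ℝ) (s : Bool) : ℝ :=
  G.m s * ∑ a, G.arcFlow f a s * G.len a

/-- Unit energy price of class `s` at flow `f`: `λ_e(L_e(f))` for EV, `λ_g` for GV. -/
noncomputable def price (f : G.R → Bool → ℝ) (s : Bool) : ℝ :=
  if s then G.lame (G.Lneed f true) else G.lamg

/-- Cost of path `r` for class `s` at flow `f`:
`c_{r,s}(f) = ∑_a δ_{a,r} (τ d_a(x_a) + t_{a,s} + l_a m_s λ_s)`. -/
noncomputable def cost (f : G.R → Bool → ℝ) (r : G.R) (s : Bool) : ℝ :=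
  ∑ a, G.δ a r * (G.τ * G.d a (G.totFlow f a) + G.toll a s + G.len a * G.m s * G.price f s)

/-- Wardrop Equilibrium: feasible, and for each class any used path is not more
costly than any other path with the same O-D pair. -/
def IsWE (f : G.R → Bool → ℝ) : Prop :=
  G.Feasible f ∧ ∀ (s : Bool) (r r' : G.R), G.od r = G.od r' → 0 < f r s →
    G.cost f r s ≤ G.cost f r' s

/-- The Beckmann function
`B(f) = τ ∑_a ∫_0^{x_a} d_a + ∑_{a,s} t_{a,s} x_{a,s} + ∫_0^{L_e(f)} λ_e + λ_g L_g(f)`. -/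
noncomputable def Beckmann (f : G.R → Bool → ℝ) : ℝ :=
  G.τ * ∑ a, (∫ u in (0 : ℝ)..G.totFlow f a, G.d a u)
    + ∑ a, ∑ s : Bool, G.toll a s * G.arcFlow f a s
    + (∫ u in (0 : ℝ)..G.Lneed f true, G.lame u)
    + G.lamg * G.Lneed f false

end RoutingGame

/-! Moving a mass `ε ∈ [0, f_{r,s}]` of class `s` from a used path `r` to a path `r'` with the
same O-D pair keeps the flow feasible. Along any line `f + ε v` the Beckmann function has
one-sided derivative `∑ v_{r,s} c_{r,s}(f)` at `ε = 0`: by the fundamental theorem of calculus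
(this is where continuity of `d_a` and `λ_e` enters) the path costs are the gradient of `B`.
For the transfer direction this derivative is `c_{r',s}(f) - c_{r,s}(f)`, and it cannot be
negative at a local minimum. -/

open Set

theorem hasDerivWithinAt_integral_add_mul {g : ℝ → ℝ} (hg : ContinuousOn g (Ici 0))
    {x y : ℝ} (hx : 0 ≤ x) {S : Set ℝ} (hS : ∀ ε ∈ S, 0 ≤ x + ε * y) :
    HasDerivWithinAt (fun ε => ∫ u in (0 : ℝ)..x + ε * y, g u) (g x * y) S 0 := by
  -- `g ∘ max · 0` is continuous on all of `ℝ` and has the same integrals over `[0, z]`, `z ≥ 0`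
  set g' : ℝ → ℝ := fun u => g (max u 0)
  have hg' : Continuous g' :=
    hg.comp_continuous (continuous_id.max continuous_const) fun u => le_max_right u 0
  have hint : ∀ z, 0 ≤ z → ∫ u in (0 : ℝ)..z, g u = ∫ u in (0 : ℝ)..z, g' u := fun z hz =>
    intervalIntegral.integral_congr fun u hu => by
      rw [uIcc_of_le hz] at hu
      simp [g', max_eq_left hu.1]
  have hF : HasDerivAt (fun z => ∫ u in (0 : ℝ)..z, g' u) (g x) x := by
    simpa [g', max_eq_left hx] using (hg'.integral_hasStrictDerivAt 0 x).hasDerivAt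
  have hline : HasDerivAt (fun ε : ℝ => x + ε * y) y 0 := by
    simpa using ((hasDerivAt_id (0 : ℝ)).mul_const y).const_add x
  exact ((hF.comp_of_eq 0 hline (by simp)).hasDerivWithinAt).congr
    (fun ε hε => hint _ (hS ε hε)) (hint _ (by simpa using hx))

theorem IsLocalMinOn.comp_add_smul {E β : Type*} [AddCommGroup E] [Module ℝ E]
    [TopologicalSpace E] [ContinuousAdd E] [ContinuousSMul ℝ E] [Preorder β]
    {B : E → β} {F : Set E} {f : E} (h : IsLocalMinOn B F f) (hf : f ∈ F) (v : E) :
    IsLocalMinOn (fun ε : ℝ => B (f + ε • v)) {ε | f + ε • v ∈ F} 0 := by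
  exact IsLocalMinOn.comp_continuousOn (g := fun ε : ℝ => f + ε • v) (by simpa using h)
    (fun ε hε => hε) (by fun_prop) (by simpa using hf)

theorem IsLocalMinOn.hasDerivWithinAt_nonneg_of_Icc_subset {φ : ℝ → ℝ} {φ' a δ : ℝ}
    {S : Set ℝ} (h : IsLocalMinOn φ S a) (hφ : HasDerivWithinAt φ φ' S a) (hδ : 0 < δ)
    (hS : Icc a (a + δ) ⊆ S) : 0 ≤ φ' := by
  have hcone : δ ∈ posTangentConeAt S a :=
    mem_posTangentConeAt_of_segment_subset (by rwa [segment_eq_Icc (by linarith)])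
  have := h.hasFDerivWithinAt_nonneg hφ.hasFDerivWithinAt hcone
  rw [ContinuousLinearMap.toSpanSingleton_apply, smul_eq_mul] at this
  exact (mul_nonneg_iff_of_pos_left hδ).1 this

namespace RoutingGame

variable {G : RoutingGame} (f v : G.R → Bool → ℝ)

theorem δ_nonneg (a : G.A) (r : G.R) : 0 ≤ G.δ a r := by
  rcases G.δ_mem a r with h | h <;> simp [h]

theorem arcFlow_add_smul (c : ℝ) (a : G.A) (s : Bool) :
    G.arcFlow (f + c • v) a s = G.arcFlow f a s + c * G.arcFlow v a s := by
  simp only [arcFlow, Pi.add_apply, Pi.smul_apply, smul_eq_mul, Finset.mul_sum,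
    ← Finset.sum_add_distrib]
  exact Finset.sum_congr rfl fun _ _ => by ring

theorem totFlow_add_smul (c : ℝ) (a : G.A) :
    G.totFlow (f + c • v) a = G.totFlow f a + c * G.totFlow v a := by
  simp only [totFlow, arcFlow_add_smul]
  ring

theorem Lneed_add_smul (c : ℝ) (s : Bool) :
    G.Lneed (f + c • v) s = G.Lneed f s + c * G.Lneed v s := by
  simp only [Lneed, arcFlow_add_smul, add_mul, Finset.sum_add_distrib, mul_assoc,
    ← Finset.mul_sum]
  ring

theorem sum_mul_cost :
    ∑ r, ∑ s, v r s * G.cost f r s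
      = G.τ * ∑ a, G.d a (G.totFlow f a) * G.totFlow v a
        + ∑ a, ∑ s, G.toll a s * G.arcFlow v a s
        + G.lame (G.Lneed f true) * G.Lneed v true + G.lamg * G.Lneed v false := by
  have hswap : ∑ r, ∑ s, v r s * G.cost f r s = ∑ a, ∑ s,
      (G.τ * G.d a (G.totFlow f a) + G.toll a s + G.len a * G.m s * G.price f s)
        * G.arcFlow v a s := by
    simp only [cost, arcFlow, Finset.mul_sum]
    rw [Finset.sum_comm_cycle]
    refine Finset.sum_congr rfl fun a _ => ?_
    rw [Finset.sum_comm]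
    exact Finset.sum_congr rfl fun s _ => Finset.sum_congr rfl fun r _ => by ring
  rw [hswap]
  simp only [Fintype.sum_bool, totFlow, Lneed, price, if_true, Bool.false_eq_true, if_false,
    Finset.mul_sum, ← Finset.sum_add_distrib]
  exact Finset.sum_congr rfl fun a _ => by ring

variable {f}

theorem Feasible.arcFlow_nonneg (hf : G.Feasible f) (a : G.A) (s : Bool) :
    0 ≤ G.arcFlow f a s :=
  Finset.sum_nonneg fun r _ => mul_nonneg (δ_nonneg a r) (hf.1 r s)

theorem Feasible.totFlow_nonneg (hf : G.Feasible f) (a : G.A) : 0 ≤ G.totFlow f a :=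
  add_nonneg (hf.arcFlow_nonneg a true) (hf.arcFlow_nonneg a false)

theorem Feasible.Lneed_nonneg (hf : G.Feasible f) (s : Bool) : 0 ≤ G.Lneed f s :=
  mul_nonneg (G.m_pos s).le
    (Finset.sum_nonneg fun a _ => mul_nonneg (hf.arcFlow_nonneg a s) (G.len_pos a).le)

theorem hasDerivWithinAt_Beckmann_add_smul (hd : ∀ a, ContinuousOn (G.d a) (Ici 0))
    (hlame : ContinuousOn G.lame (Ici 0)) (hf : G.Feasible f) :
    HasDerivWithinAt (fun ε : ℝ => G.Beckmann (f + ε • v))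
      (∑ r, ∑ s, v r s * G.cost f r s) {ε | G.Feasible (f + ε • v)} 0 := by
  simp only [Beckmann, totFlow_add_smul, arcFlow_add_smul, Lneed_add_smul, sum_mul_cost]
  have hline : ∀ x y : ℝ, HasDerivWithinAt (fun ε : ℝ => x + ε * y) y
      {ε | G.Feasible (f + ε • v)} 0 := fun x y => by
    simpa using ((hasDerivWithinAt_id (0 : ℝ) _).mul_const y).const_add x
  have hflow : ∀ a, HasDerivWithinAt
      (fun ε : ℝ => ∫ u in (0 : ℝ)..G.totFlow f a + ε * G.totFlow v a, G.d a u)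
      (G.d a (G.totFlow f a) * G.totFlow v a) {ε | G.Feasible (f + ε • v)} 0 := fun a =>
    hasDerivWithinAt_integral_add_mul (hd a) (hf.totFlow_nonneg a) fun ε hε => by
      simpa only [totFlow_add_smul] using hε.totFlow_nonneg a
  have henergy := hasDerivWithinAt_integral_add_mul hlame (hf.Lneed_nonneg true)
    (S := {ε | G.Feasible (f + ε • v)}) fun ε hε => by
      simpa only [Lneed_add_smul] using hε.Lneed_nonneg true
  exact ((((HasDerivWithinAt.fun_sum fun a _ => hflow a).const_mul G.τ).add
    (HasDerivWithinAt.fun_sum fun a _ => HasDerivWithinAt.fun_sum fun s _ =>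
      (hline _ _).const_mul (G.toll a s))).add henergy).add ((hline _ _).const_mul G.lamg)

variable [DecidableEq G.R] {r r' : G.R} {s : Bool}

def transfer (r r' : G.R) (s : Bool) : G.R → Bool → ℝ :=
  Pi.single r' (Pi.single s 1) - Pi.single r (Pi.single s 1)

theorem sum_transfer_mul (c : G.R → Bool → ℝ) :
    ∑ ρ, ∑ σ, transfer r r' s ρ σ * c ρ σ = c r' s - c r s := by
  simp [transfer, Pi.single_apply, ite_apply, sub_mul, Finset.sum_sub_distrib]

open scoped Classical in
theorem sum_ite_od_transfer (hod : G.od r = G.od r') (k : G.K) (σ : Bool) :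
    (∑ x, if G.od x = k then transfer r r' s x σ else 0) = 0 := by
  have hsingle : ∀ ρ, (∑ x, if G.od x = k then
      (Pi.single ρ (Pi.single s 1) : G.R → Bool → ℝ) x σ else 0)
        = if G.od ρ = k then (Pi.single s 1 : Bool → ℝ) σ else 0 := fun ρ => by
    rw [Finset.sum_eq_single ρ (fun x _ hx => by simp [hx]) (by simp)]
    simp
  have hsplit : ∀ x, (if G.od x = k then transfer r r' s x σ else 0)
      = (if G.od x = k then (Pi.single r' (Pi.single s 1) : G.R → Bool → ℝ) x σ else 0)
        - (if G.od x = k then (Pi.single r (Pi.single s 1) : G.R → Bool → ℝ) x σ else 0) :=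
    fun x => by split_ifs <;> simp [transfer]
  simp only [hsplit, Finset.sum_sub_distrib, hsingle, hod, sub_self]

theorem Feasible.add_smul_transfer (hf : G.Feasible f) (hod : G.od r = G.od r') {ε : ℝ}
    (hε : ε ∈ Icc 0 (f r s)) : G.Feasible (f + ε • transfer r r' s) := by
  constructor
  · intro ρ σ
    have := hf.1 ρ σ
    simp only [transfer, Pi.add_apply, Pi.smul_apply, Pi.sub_apply, Pi.single_apply, ite_apply,
      Pi.zero_apply, smul_eq_mul]
    split_ifs <;> subst_vars <;> nlinarith [hε.1, hε.2]
  · intro k σ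
    simp only [Pi.add_apply, Pi.smul_apply, smul_eq_mul, ite_add_zero, Finset.sum_add_distrib,
      hf.2 k σ, ← mul_ite_zero, ← Finset.mul_sum, sum_ite_od_transfer hod, mul_zero, add_zero]

end RoutingGame

/-- Prop. 3: if the travel-time functions and the charging unit
price are continuous, then every local minimum of the Beckmann function over the
feasible set of path flows is a Wardrop Equilibrium. -/
theorem localMin_Beckmann_isWE (G : RoutingGame)
    (hd : ∀ a, ContinuousOn (G.d a) (Set.Ici 0))
    (hlame : ContinuousOn G.lame (Set.Ici 0))
    (f : G.R → Bool → ℝ) (hfeas : G.Feasible f)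
    (hmin : IsLocalMinOn G.Beckmann {f' | G.Feasible f'} f) :
    G.IsWE f := by
  classical
  refine ⟨hfeas, fun s r r' hod hpos => ?_⟩
  have hderiv := RoutingGame.hasDerivWithinAt_Beckmann_add_smul
    (RoutingGame.transfer r r' s) hd hlame hfeas
  have hseg : Icc 0 (0 + f r s) ⊆ {ε | G.Feasible (f + ε • RoutingGame.transfer r r' s)} :=
    fun ε hε => hfeas.add_smul_transfer hod (by simpa using hε)
  have hnonneg := (hmin.comp_add_smul hfeas _).hasDerivWithinAt_nonneg_of_Icc_subset
    hderiv hpos hseg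
  rw [RoutingGame.sum_transfer_mul] at hnonneg
  linarith
end
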